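/- arXiv:1705.01913 — 6 statements merged into one kernel-verified Lean document; each statement's English description precedes it below -/
import Mathlib

section
/- Let α > 0, U : H → H be a linear continuous self-adjoint operator with ⟨x, Ux⟩ ≥ α‖x‖² for all x, and A : H ⇒ H maximally monotone. Then for every x ∈ H there exists a unique p ∈ H with x ∈ Up + Ap, i.e., the operator (U + A)⁻¹ : H → H is single-valued with full domain. -/
open RealInnerProductSpace

def MonotoneOp {H : Type*} [NormedAddCommGroup H] [InnerProductSpace ℝ H]
    (A : H → Set H) : Prop :=
  ∀ x y u v, u ∈ A x → v ∈ A y → 0 ≤ ⟪x - y, u - v⟫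

def MaximalMonotoneOp {H : Type*} [NormedAddCommGroup H] [InnerProductSpace ℝ H]
    (A : H → Set H) : Prop :=
  MonotoneOp A ∧ ∀ x u, (∀ y v, v ∈ A y → 0 ≤ ⟪x - y, u - v⟫) → u ∈ A x

/-!
For fixed `x`, write `q u = ⟪u, U u⟫` and consider on `H × H`
`F (z, w) = sup_{b ∈ A a} (q (z + w) / 2 - ⟪z - a, U w + x - b⟫)`.
By maximality `F (z, w) ≥ q (z + w) / 2 ≥ 0`, and `F` is an affine supremum plus
`(q z + q w) / 2`, hence strongly convex: minimising sequences are Cauchy and `F` attains its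
infimum `m` at some `(z, w)`. Where `U c = b - x` with `b ∈ A a`, monotonicity gives
`F (a, c) ≤ q (a + c) / 2`, and comparing `F` along the segment from `(z, w)` to `(a, c)` yields
`m + (q (z - a) + q (w - c)) / 2 ≤ q (a + c) / 2`. By polarization and maximality this puts
`x - U z ∈ A (-w)`; feeding that point back in forces `z + w = 0`, so `p = z` solves the inclusion.
Uniqueness is monotonicity plus coercivity.
-/

open Filter Topology

lemma cauchySeq_of_norm_sub_sq_le {E : Type*} [SeminormedAddCommGroup E] {s : ℕ → E}
    {ε : ℕ → ℝ} (hε : Tendsto ε atTop (𝓝 0)) (h : ∀ n k, ‖s n - s k‖ ^ 2 ≤ ε n + ε k) :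
    CauchySeq s := by
  refine Metric.cauchySeq_iff'.2 fun δ hδ => ?_
  obtain ⟨N, hN⟩ :=
    eventually_atTop.1 (hε.eventually (gt_mem_nhds (by positivity : 0 < δ ^ 2 / 2)))
  refine ⟨N, fun n hn => ?_⟩
  rw [dist_eq_norm]
  have : ‖s n - s N‖ ^ 2 < δ ^ 2 := by linarith [h n N, hN n hn, hN N le_rfl]
  exact lt_of_pow_lt_pow_left₀ 2 hδ.le this

section

variable {H : Type*} [NormedAddCommGroup H] [InnerProductSpace ℝ H]
  {U : H →L[ℝ] H} {A : H → Set H} {x : H} {α : ℝ}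

lemma inner_apply_self_nonneg_of_coercive (hα : 0 < α) (hU : ∀ u : H, α * ‖u‖ ^ 2 ≤ ⟪u, U u⟫)
    (u : H) : 0 ≤ ⟪u, U u⟫ :=
  (by positivity : 0 ≤ α * ‖u‖ ^ 2).trans (hU u)

lemma eq_zero_of_inner_apply_self_nonpos (hα : 0 < α) (hU : ∀ u : H, α * ‖u‖ ^ 2 ≤ ⟪u, U u⟫)
    {u : H} (hu : ⟪u, U u⟫ ≤ 0) : u = 0 := by
  simpa using nonpos_of_mul_nonpos_right ((hU u).trans hu) hα

lemma surjective_of_coercive [CompleteSpace H] (hα : 0 < α)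
    (hU : ∀ u : H, α * ‖u‖ ^ 2 ≤ ⟪u, U u⟫) : Function.Surjective U := by
  have hB : IsCoercive ((innerSL ℝ).comp U) :=
    ⟨α, hα, fun u => by simpa [real_inner_comm, mul_assoc, pow_two] using hU u⟩
  have hUeq : ∀ v, hB.continuousLinearEquivOfBilin v = U v := fun v =>
    ext_inner_right ℝ (hB.continuousLinearEquivOfBilin_apply v)
  exact fun y => ⟨hB.continuousLinearEquivOfBilin.symm y, by simp [← hUeq]⟩

lemma real_inner_apply_comm (hU : (U : H →ₗ[ℝ] H).IsSymmetric) (u v : H) :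
    ⟪u, U v⟫ = ⟪v, U u⟫ := by
  rw [real_inner_comm]
  exact hU v u

lemma MaximalMonotoneOp.exists_mem (hA : MaximalMonotoneOp A) : ∃ a b, b ∈ A a := by
  by_contra! h
  exact h 0 0 (hA.2 0 0 fun y v hv => absurd hv (h y v))

lemma MonotoneOp.eq_of_sub_apply_mem (hA : MonotoneOp A) (hdef : ∀ u, ⟪u, U u⟫ ≤ 0 → u = 0)
    {p q : H} (hp : x - U p ∈ A p) (hq : x - U q ∈ A q) : p = q := by
  have hmono := hA p q _ _ hp hq
  rw [sub_sub_sub_cancel_left, ← map_sub, ← neg_sub p q, map_neg, inner_neg_right] at hmono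
  exact sub_eq_zero.1 (hdef _ (by linarith))

noncomputable def mintyPhi (U : H →L[ℝ] H) (x z w a b : H) : ℝ :=
  ⟪z - a, b - x⟫ + ⟪a, U w⟫ + ⟪z, U z⟫ / 2 + ⟪w, U w⟫ / 2

/-- `mintyPhi U x z w a b` is the term of the supremum defining `F (z, w)` (see `mintyPhi_eq`);
`MintyBound U A x z w r` encodes `F (z, w) ≤ r`, so that `F` never has to take the value `∞`. -/
def MintyBound (U : H →L[ℝ] H) (A : H → Set H) (x z w : H) (r : ℝ) : Prop :=
  ∀ a b, b ∈ A a → mintyPhi U x z w a b ≤ r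

def MintyMinimizer (U : H →L[ℝ] H) (A : H → Set H) (x z w : H) (m : ℝ) : Prop :=
  MintyBound U A x z w m ∧ ∀ z' w' r, MintyBound U A x z' w' r → m ≤ r

lemma mintyPhi_eq (hU : (U : H →ₗ[ℝ] H).IsSymmetric) (z w a b : H) :
    mintyPhi U x z w a b = ⟪z + w, U (z + w)⟫ / 2 - ⟪z - a, (U w + x) - b⟫ := by
  simp only [mintyPhi, inner_add_left, inner_add_right, inner_sub_left, inner_sub_right, map_add]
  linarith [real_inner_apply_comm hU z w]

lemma mintyPhi_convexComb (t : ℝ) (z₁ w₁ z₂ w₂ a b : H) :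
    mintyPhi U x ((1 - t) • z₁ + t • z₂) ((1 - t) • w₁ + t • w₂) a b
      = (1 - t) * mintyPhi U x z₁ w₁ a b + t * mintyPhi U x z₂ w₂ a b
        - t * (1 - t) * (⟪z₁ - z₂, U (z₁ - z₂)⟫ + ⟪w₁ - w₂, U (w₁ - w₂)⟫) / 2 := by
  simp only [mintyPhi, inner_add_left, inner_add_right, inner_sub_left, inner_sub_right, map_add,
    map_sub, map_smul, real_inner_smul_left, real_inner_smul_right]
  ring

lemma MintyBound.mono {z w : H} {r r' : ℝ} (h : MintyBound U A x z w r) (hr : r ≤ r') :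
    MintyBound U A x z w r' :=
  fun a b hb => (h a b hb).trans hr

lemma MintyBound.convexComb {z₁ w₁ z₂ w₂ : H} {r₁ r₂ t : ℝ} (h₁ : MintyBound U A x z₁ w₁ r₁)
    (h₂ : MintyBound U A x z₂ w₂ r₂) (ht₀ : 0 ≤ t) (ht₁ : t ≤ 1) :
    MintyBound U A x ((1 - t) • z₁ + t • z₂) ((1 - t) • w₁ + t • w₂)
      ((1 - t) * r₁ + t * r₂
        - t * (1 - t) * (⟪z₁ - z₂, U (z₁ - z₂)⟫ + ⟪w₁ - w₂, U (w₁ - w₂)⟫) / 2) := by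
  intro a b hb
  have h₁' := h₁ a b hb
  have h₂' := h₂ a b hb
  rw [mintyPhi_convexComb]
  gcongr

lemma MintyBound.of_tendsto {z w : ℕ → H} {r : ℕ → ℝ} {z₀ w₀ : H} {r₀ : ℝ}
    (h : ∀ n, MintyBound U A x (z n) (w n) (r n)) (hz : Tendsto z atTop (𝓝 z₀))
    (hw : Tendsto w atTop (𝓝 w₀)) (hr : Tendsto r atTop (𝓝 r₀)) :
    MintyBound U A x z₀ w₀ r₀ := by
  intro a b hb
  have hcont : Continuous fun p : H × H => mintyPhi U x p.1 p.2 a b := by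
    unfold mintyPhi; fun_prop
  exact le_of_tendsto_of_tendsto' ((hcont.tendsto _).comp (hz.prodMk_nhds hw)) hr
    fun n => h n a b hb

lemma MintyBound.inner_le (hU : (U : H →ₗ[ℝ] H).IsSymmetric) (hA : MaximalMonotoneOp A)
    {z w : H} {r : ℝ} (h : MintyBound U A x z w r) : ⟪z + w, U (z + w)⟫ / 2 ≤ r := by
  by_cases hgap : ∀ a b, b ∈ A a → 0 ≤ ⟪z - a, (U w + x) - b⟫
  · simpa [mintyPhi_eq hU] using h z (U w + x) (hA.2 z _ hgap)
  · push Not at hgap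
    obtain ⟨a, b, hb, hlt⟩ := hgap
    have := h a b hb
    rw [mintyPhi_eq hU] at this
    linarith

lemma mintyBound_of_mem (hU : (U : H →ₗ[ℝ] H).IsSymmetric) (hA : MonotoneOp A) {a b c : H}
    (hb : b ∈ A a) (hc : U c = b - x) : MintyBound U A x a c (⟪a + c, U (a + c)⟫ / 2) := by
  intro a' b' hb'
  have hUcx : U c + x = b := by rw [hc, sub_add_cancel]
  rw [mintyPhi_eq hU, hUcx]
  linarith [hA a a' b b' hb hb']

lemma MintyBound.cauchySeq (hα : 0 < α) (hcoer : ∀ u : H, α * ‖u‖ ^ 2 ≤ ⟪u, U u⟫)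
    {m : ℝ} (hlow : ∀ z w r, MintyBound U A x z w r → m ≤ r) {z w : ℕ → H} {r : ℕ → ℝ}
    (h : ∀ n, MintyBound U A x (z n) (w n) (r n)) (hr : Tendsto r atTop (𝓝 m)) :
    CauchySeq z ∧ CauchySeq w := by
  have hpos := inner_apply_self_nonneg_of_coercive hα hcoer
  have hmid : ∀ n k, ⟪z n - z k, U (z n - z k)⟫ + ⟪w n - w k, U (w n - w k)⟫
      ≤ 4 * (r n - m) + 4 * (r k - m) := fun n k => by
    have := hlow _ _ _ ((h n).convexComb (h k) (t := 1 / 2) (by norm_num) (by norm_num))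
    linarith
  have hε : Tendsto (fun n => 4 * (r n - m) / α) atTop (𝓝 0) := by
    simpa using ((hr.sub_const m).const_mul 4).div_const α
  constructor <;> refine cauchySeq_of_norm_sub_sq_le hε fun n k => ?_ <;>
    rw [← add_div, le_div_iff₀ hα]
  · linarith [hcoer (z n - z k), hmid n k, hpos (w n - w k)]
  · linarith [hcoer (w n - w k), hmid n k, hpos (z n - z k)]

lemma exists_mintyMinimizer [CompleteSpace H] (hα : 0 < α)
    (hcoer : ∀ u : H, α * ‖u‖ ^ 2 ≤ ⟪u, U u⟫) (hU : (U : H →ₗ[ℝ] H).IsSymmetric)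
    (hA : MaximalMonotoneOp A) (x : H) : ∃ z w m, MintyMinimizer U A x z w m := by
  set D := {r | ∃ z w, MintyBound U A x z w r}
  have hne : D.Nonempty := by
    obtain ⟨a, b, hb⟩ := hA.exists_mem
    obtain ⟨c, hc⟩ := surjective_of_coercive hα hcoer (b - x)
    exact ⟨_, a, c, mintyBound_of_mem hU hA.1 hb hc⟩
  have hbdd : BddBelow D := by
    refine ⟨0, fun r ⟨z, w, h⟩ => ?_⟩
    linarith [h.inner_le hU hA, inner_apply_self_nonneg_of_coercive hα hcoer (z + w)]
  have hlow : ∀ z w r, MintyBound U A x z w r → sInf D ≤ r :=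
    fun z w r h => csInf_le hbdd ⟨z, w, h⟩
  have hseq : ∀ n : ℕ, ∃ z w, MintyBound U A x z w (sInf D + 1 / (n + 1)) := fun n => by
    obtain ⟨r, ⟨z, w, h⟩, hr⟩ := exists_lt_of_csInf_lt hne
      (lt_add_of_pos_right (sInf D) Nat.one_div_pos_of_nat)
    exact ⟨z, w, h.mono hr.le⟩
  choose z w hzw using hseq
  have hr : Tendsto (fun n : ℕ => sInf D + 1 / ((n : ℝ) + 1)) atTop (𝓝 (sInf D)) := by
    simpa using tendsto_one_div_add_atTop_nhds_zero_nat.const_add (sInf D)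
  obtain ⟨hz, hw⟩ := MintyBound.cauchySeq hα hcoer hlow hzw hr
  obtain ⟨z₀, hz₀⟩ := cauchySeq_tendsto_of_complete hz
  obtain ⟨w₀, hw₀⟩ := cauchySeq_tendsto_of_complete hw
  exact ⟨z₀, w₀, sInf D, MintyBound.of_tendsto hzw hz₀ hw₀ hr, hlow⟩

lemma MintyMinimizer.variational {z w : H} {m : ℝ} (hmin : MintyMinimizer U A x z w m)
    (hU : (U : H →ₗ[ℝ] H).IsSymmetric) (hA : MonotoneOp A) {a b c : H} (hb : b ∈ A a)
    (hc : U c = b - x) :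
    m + (⟪z - a, U (z - a)⟫ + ⟪w - c, U (w - c)⟫) / 2 ≤ ⟪a + c, U (a + c)⟫ / 2 := by
  set Q := ⟪z - a, U (z - a)⟫ + ⟪w - c, U (w - c)⟫
  set R := ⟪a + c, U (a + c)⟫ / 2
  have hseg : ∀ t ∈ Set.Ioc (0 : ℝ) 1, m + Q / 2 - R ≤ t * (Q / 2) := by
    rintro t ⟨ht₀, ht₁⟩
    have hcomb : m ≤ (1 - t) * m + t * R - t * (1 - t) * Q / 2 :=
      hmin.2 _ _ _ (hmin.1.convexComb (mintyBound_of_mem hU hA hb hc) ht₀.le ht₁)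
    have : t * (m + Q / 2 - R - t * (Q / 2)) ≤ 0 := by linarith
    linarith [nonpos_of_mul_nonpos_right this ht₀]
  have hlim : Tendsto (fun t : ℝ => t * (Q / 2)) (𝓝[>] 0) (𝓝 0) :=
    ((continuous_mul_const (Q / 2)).tendsto' 0 0 (zero_mul _)).mono_left nhdsWithin_le_nhds
  linarith [ge_of_tendsto hlim (mem_of_superset (Ioc_mem_nhdsGT one_pos) hseg)]

lemma MintyMinimizer.mem_neg {z w : H} {m : ℝ} (hmin : MintyMinimizer U A x z w m)
    (hsurj : Function.Surjective U) (hpos : ∀ u, 0 ≤ ⟪u, U u⟫)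
    (hU : (U : H →ₗ[ℝ] H).IsSymmetric) (hA : MaximalMonotoneOp A) : x - U z ∈ A (-w) := by
  refine hA.2 _ _ fun a b hb => ?_
  obtain ⟨c, hc⟩ := hsurj (b - x)
  have hpolar : 2 * ⟪w + a, U (z + c)⟫ = ⟪a + c, U (a + c)⟫ + ⟪z + w, U (z + w)⟫
      - ⟪z - a, U (z - a)⟫ - ⟪w - c, U (w - c)⟫ := by
    simp only [inner_add_left, inner_add_right, inner_sub_left, inner_sub_right, map_add, map_sub]
    linarith [real_inner_apply_comm hU z w, real_inner_apply_comm hU z a,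
      real_inner_apply_comm hU z c, real_inner_apply_comm hU w a, real_inner_apply_comm hU w c,
      real_inner_apply_comm hU a c]
  have hrw : ⟪-w - a, x - U z - b⟫ = ⟪w + a, U (z + c)⟫ := by
    rw [map_add, hc, ← inner_neg_neg]
    congr 1 <;> abel
  rw [hrw]
  linarith [hmin.variational hU hA.1 hb hc, hmin.1.inner_le hU hA, hpos (z + w)]

lemma MintyMinimizer.add_eq_zero {z w : H} {m : ℝ} (hmin : MintyMinimizer U A x z w m)
    (hsurj : Function.Surjective U) (hpos : ∀ u, 0 ≤ ⟪u, U u⟫)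
    (hdef : ∀ u, ⟪u, U u⟫ ≤ 0 → u = 0) (hU : (U : H →ₗ[ℝ] H).IsSymmetric)
    (hA : MaximalMonotoneOp A) : z + w = 0 := by
  have hc : U (-z) = (x - U z) - x := by rw [map_neg]; abel
  have hvar := hmin.variational hU hA.1 (hmin.mem_neg hsurj hpos hU hA) hc
  rw [sub_neg_eq_add, sub_neg_eq_add, add_comm w z, ← neg_add, add_comm w z, map_neg,
    inner_neg_neg] at hvar
  exact hdef _ (by linarith [hmin.1.inner_le hU hA])

end

/-- For `U` linear continuous self-adjoint strongly positive and `A` maximally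
monotone, `(U + A)⁻¹` is single-valued with full domain: for every `x` there is
a unique `p` with `x ∈ Up + Ap`. -/
theorem U_plus_A_inverse_single_valued
    {H : Type*} [NormedAddCommGroup H] [InnerProductSpace ℝ H] [CompleteSpace H]
    (α : ℝ) (hα : 0 < α) (U : H →L[ℝ] H)
    (hU_selfadj : ∀ x y : H, ⟪U x, y⟫ = ⟪x, U y⟫)
    (hU_coercive : ∀ x : H, α * ‖x‖ ^ 2 ≤ ⟪x, U x⟫)
    (A : H → Set H) (hA : MaximalMonotoneOp A) :
    ∀ x : H, ∃! p : H, x - U p ∈ A p := by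
  have hpos := inner_apply_self_nonneg_of_coercive hα hU_coercive
  have hdef : ∀ u, ⟪u, U u⟫ ≤ 0 → u = 0 :=
    fun _ => eq_zero_of_inner_apply_self_nonpos hα hU_coercive
  have hsurj := surjective_of_coercive hα hU_coercive
  intro x
  obtain ⟨z, w, m, hmin⟩ := exists_mintyMinimizer hα hU_coercive hU_selfadj hA x
  have hmem := hmin.mem_neg hsurj hpos hU_selfadj hA
  rw [neg_eq_of_add_eq_zero_left (hmin.add_eq_zero hsurj hpos hdef hU_selfadj hA)] at hmem
  exact ⟨z, hmem, fun q hq => hA.1.eq_of_sub_apply_mem hdef hq hmem⟩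
end

section
/- Let λ > 0, γ > 0, μ ≥ 0, and define the sequence (τ_n)_{n≥1} by τ₁ > 0 with μτ₁ < 2γ and τ_{n+1} = τ_n / √(1 + (τ_n/λ)(2γ − μτ_n)) for n ≥ 1. Then (τ_n) is strictly decreasing, positive, and lim_{n→∞} n·τ_n = λ/γ. -/
open Filter Topology

/-!
Passing to the reciprocals `s n = 1 / τ n`, the recursion becomes
`s (n+1)² = s n² + (2γ/λ) s n − μ/λ`. The condition `μ τ₁ < 2γ` makes the increment
`(2γ/λ) s n − μ/λ` positive and nondecreasing, so `s` is increasing and `s n²` grows at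
least linearly; hence `s n → ∞`. Then
`s (n+1) − s n = (2γ/λ − (μ/λ)/s n) / (1 + √(1 + (2γ/λ)/s n − (μ/λ)/s n²)) → γ/λ`,
and by Cesàro `s n / n → γ/λ`, i.e. `n τ n → λ/γ`.
-/

theorem tendsto_div_natCast_of_tendsto_sub {s : ℕ → ℝ} {l : ℝ}
    (h : Tendsto (fun n => s (n + 1) - s n) atTop (𝓝 l)) :
    Tendsto (fun n : ℕ => s n / n) atTop (𝓝 l) := by
  have h0 : Tendsto (fun n : ℕ => s 0 / n) atTop (𝓝 0) := tendsto_const_div_atTop_nhds_zero_nat _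
  refine (add_zero l ▸ h.cesaro.add h0).congr fun n => ?_
  rw [Finset.sum_range_sub (fun i => s i)]
  ring

section SqAffineRecursion

variable {a b : ℝ} {s : ℕ → ℝ} (hpos : ∀ n, 0 < s n)
  (hrec : ∀ n, s (n + 1) ^ 2 = s n ^ 2 + a * s n - b)
include hpos hrec

theorem apply_zero_le_of_sq_succ_eq (ha : 0 ≤ a) (hb : b < a * s 0) (n : ℕ) : s 0 ≤ s n := by
  induction n with
  | zero => rfl
  | succ n ih =>
    have hsq : s n ^ 2 < s (n + 1) ^ 2 := by rw [hrec]; nlinarith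
    have := (pow_lt_pow_iff_left₀ (hpos n).le (hpos (n + 1)).le two_ne_zero).1 hsq
    linarith

theorem tendsto_atTop_of_sq_succ_eq (ha : 0 ≤ a) (hb : b < a * s 0) :
    Tendsto s atTop atTop := by
  have hgrowth : ∀ n : ℕ, n * (a * s 0 - b) ≤ s n ^ 2 := by
    intro n
    induction n with
    | zero => simpa using sq_nonneg (s 0)
    | succ n ih =>
      have := apply_zero_le_of_sq_succ_eq hpos hrec ha hb n
      push_cast
      nlinarith [hrec n]
  have hsq : Tendsto (fun n => s n ^ 2) atTop atTop :=
    tendsto_atTop_mono hgrowth (tendsto_natCast_atTop_atTop.atTop_mul_const (by linarith))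
  refine (Real.tendsto_sqrt_atTop.comp hsq).congr fun n => ?_
  exact Real.sqrt_sq (hpos n).le

theorem sub_eq_of_sq_succ_eq (n : ℕ) :
    s (n + 1) - s n =
      (a - b * (s n)⁻¹) / (1 + √(1 + a * (s n)⁻¹ - b * (s n)⁻¹ ^ 2)) := by
  have hs := (hpos n).ne'
  have hratio : 1 + a * (s n)⁻¹ - b * (s n)⁻¹ ^ 2 = (s (n + 1) / s n) ^ 2 := by
    rw [div_pow, hrec]
    field_simp
  have hratio_pos := div_pos (hpos (n + 1)) (hpos n)
  rw [hratio, Real.sqrt_sq hratio_pos.le, eq_div_iff (add_pos one_pos hratio_pos).ne']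
  field_simp
  linear_combination hrec n

theorem tendsto_sub_of_sq_succ_eq (htop : Tendsto s atTop atTop) :
    Tendsto (fun n => s (n + 1) - s n) atTop (𝓝 (a / 2)) := by
  let g : ℝ → ℝ := fun x => (a - b * x) / (1 + √(1 + a * x - b * x ^ 2))
  have hg : ContinuousAt g 0 := by
    refine ContinuousAt.div (by fun_prop) (by fun_prop) ?_
    positivity
  have hg0 : g 0 = a / 2 := by norm_num [g]
  refine (hg0 ▸ hg.tendsto.comp (tendsto_inv_atTop_zero.comp htop)).congr fun n => ?_
  exact (sub_eq_of_sq_succ_eq hpos hrec n).symm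

end SqAffineRecursion

section StepSize

variable {lam γ μ t : ℝ}

theorem stepsize_step_mem_Ioo (hlam : 0 < lam) (ht : 0 < t) (hμt : μ * t < 2 * γ) :
    t / √(1 + t / lam * (2 * γ - μ * t)) ∈ Set.Ioo 0 t := by
  have : 1 < √(1 + t / lam * (2 * γ - μ * t)) := by
    rw [Real.lt_sqrt zero_le_one, one_pow, lt_add_iff_pos_right]
    exact mul_pos (div_pos ht hlam) (sub_pos.2 hμt)
  exact ⟨div_pos ht (one_pos.trans this), div_lt_self ht this⟩

theorem inv_stepsize_step_sq (hlam : 0 < lam) (ht : 0 < t) (hμt : μ * t < 2 * γ) :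
    (t / √(1 + t / lam * (2 * γ - μ * t)))⁻¹ ^ 2 = t⁻¹ ^ 2 + 2 * γ / lam * t⁻¹ - μ / lam := by
  have hfactor := mul_pos (div_pos ht hlam) (sub_pos.2 hμt)
  rw [inv_pow, div_pow, Real.sq_sqrt (by linarith)]
  field_simp
  ring

end StepSize

theorem stepsize_asymptotics_general
    (lam γ μ : ℝ) (hlam : 0 < lam) (hμ : 0 ≤ μ)
    (τ : ℕ → ℝ) (hτ1 : 0 < τ 1) (hμτ1 : μ * τ 1 < 2 * γ)
    (hrec : ∀ n ≥ 1, τ (n + 1) =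
      τ n / Real.sqrt (1 + (τ n / lam) * (2 * γ - μ * τ n))) :
    (∀ n ≥ 1, 0 < τ n) ∧ (∀ n ≥ 1, τ (n + 1) < τ n) ∧
    Tendsto (fun n : ℕ => (n : ℝ) * τ n) atTop (𝓝 (lam / γ)) := by
  have hinv : ∀ n ≥ 1, 0 < τ n ∧ μ * τ n < 2 * γ := by
    refine Nat.le_induction ⟨hτ1, hμτ1⟩ fun n hn ⟨hτn, hμτn⟩ => ?_
    obtain ⟨hpos, hlt⟩ := hrec n hn ▸ stepsize_step_mem_Ioo hlam hτn hμτn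
    exact ⟨hpos, by nlinarith⟩
  have hdec : ∀ n ≥ 1, τ (n + 1) < τ n := fun n hn =>
    hrec n hn ▸ (stepsize_step_mem_Ioo hlam (hinv n hn).1 (hinv n hn).2).2
  refine ⟨fun n hn => (hinv n hn).1, hdec, ?_⟩
  have hγ : 0 < γ := by nlinarith
  set s : ℕ → ℝ := fun n => (τ (n + 1))⁻¹
  have hspos : ∀ n, 0 < s n := fun n => inv_pos.2 (hinv (n + 1) (by omega)).1
  have hsrec : ∀ n, s (n + 1) ^ 2 = s n ^ 2 + 2 * γ / lam * s n - μ / lam := fun n => by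
    obtain ⟨hτn, hμτn⟩ := hinv (n + 1) (by omega)
    simp only [s, hrec (n + 1) (by omega)]
    exact inv_stepsize_step_sq hlam hτn hμτn
  have hs0 : μ / lam < 2 * γ / lam * s 0 := by
    rw [div_mul_eq_mul_div, div_lt_div_iff_of_pos_right hlam, lt_mul_inv_iff₀ hτ1]
    exact hμτ1
  have hdiff := tendsto_sub_of_sq_succ_eq hspos hsrec
    (tendsto_atTop_of_sq_succ_eq hspos hsrec (by positivity) hs0)
  rw [show 2 * γ / lam / 2 = γ / lam by ring] at hdiff
  have hratio := tendsto_div_natCast_of_tendsto_sub (s := fun n => (τ n)⁻¹)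
    ((tendsto_add_atTop_iff_nat 1).1 hdiff)
  have hinvratio := hratio.inv₀ (by positivity)
  rw [inv_div] at hinvratio
  refine hinvratio.congr fun n => ?_
  simp [div_eq_mul_inv, mul_comm]

/-- The step-size recursion `τ_{n+1} = τ_n / √(1 + (τ_n/λ)(2γ − μτ_n))` with
`μτ₁ < 2γ` produces a positive strictly decreasing sequence with
`lim n·τ_n = λ/γ`. -/
theorem stepsize_asymptotics
    (lam γ μ : ℝ) (hlam : 0 < lam) (hγ : 0 < γ) (hμ : 0 ≤ μ)
    (τ : ℕ → ℝ) (hτ1 : 0 < τ 1) (hμτ1 : μ * τ 1 < 2 * γ)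
    (hrec : ∀ n ≥ 1, τ (n + 1) =
      τ n / Real.sqrt (1 + (τ n / lam) * (2 * γ - μ * τ n))) :
    (∀ n ≥ 1, 0 < τ n) ∧ (∀ n ≥ 1, τ (n + 1) < τ n) ∧
    Tendsto (fun n : ℕ => (n : ℝ) * τ n) atTop (𝓝 (lam / γ)) :=
  stepsize_asymptotics_general lam γ μ hlam hμ τ hτ1 hμτ1 hrec
end

section
/- Let λ > 0, γ > 0, μ ≥ 0, τ₁ > 0 with μτ₁ < γ, and define τ_{k+1} = τ_k/√(1 + (τ_k/λ)(2γ − μτ_k)) and θ_k = 1/√(1 + (τ_{k+1}/λ)(2γ − μτ_{k+1})) for k ≥ 1. Then μτ_k < γ for all k ≥ 1 and the sequence (θ_k) is monotonically increasing. -/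
/-!
Write `g(t) = (t/λ)(2γ − μt)`, so that `τ_{k+1} = τ_k / √(1 + g(τ_k))` and
`θ_k = 1/√(1 + g(τ_{k+1}))`. While `μτ_k < γ` we have `g(τ_k) ≥ 0`, hence `τ_{k+1} ≤ τ_k`, which
keeps `μτ_{k+1} < γ`: the step sizes decrease and stay in the region `μt < γ`. There `g` is
increasing, because `g(t) − g(s) = (t − s)(2γ − μ(s + t))/λ`, so `g(τ_{k+1})` decreases and `θ_k`
increases.
-/

namespace StepSize

noncomputable def gain (lam γ μ t : ℝ) : ℝ := t / lam * (2 * γ - μ * t)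

noncomputable def next (lam γ μ t : ℝ) : ℝ := t / Real.sqrt (1 + gain lam γ μ t)

variable {lam γ μ s t : ℝ}

theorem gain_nonneg (hlam : 0 ≤ lam) (hμ : 0 ≤ μ) (ht : 0 ≤ t) (h : μ * t < γ) :
    0 ≤ gain lam γ μ t :=
  mul_nonneg (div_nonneg ht hlam) (by nlinarith [mul_nonneg hμ ht])

theorem gain_le_gain (hlam : 0 ≤ lam) (hst : s ≤ t) (h : μ * (s + t) ≤ 2 * γ) :
    gain lam γ μ s ≤ gain lam γ μ t := by
  have key : t * (2 * γ - μ * t) - s * (2 * γ - μ * s) = (t - s) * (2 * γ - μ * (s + t)) := by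
    ring
  have hprod : s * (2 * γ - μ * s) ≤ t * (2 * γ - μ * t) := by
    nlinarith [mul_nonneg (sub_nonneg.2 hst) (sub_nonneg.2 h)]
  simpa only [gain, div_mul_eq_mul_div] using div_le_div_of_nonneg_right hprod hlam

theorem next_pos (ht : 0 < t) (hg : 0 ≤ gain lam γ μ t) : 0 < next lam γ μ t :=
  div_pos ht (Real.sqrt_pos.2 (by linarith))

theorem next_le (ht : 0 ≤ t) (hg : 0 ≤ gain lam γ μ t) : next lam γ μ t ≤ t :=
  div_le_self ht (Real.one_le_sqrt.2 (by linarith))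

theorem one_div_sqrt_one_add_le_of_le {a b : ℝ} (ha : 0 ≤ a) (hab : a ≤ b) :
    1 / Real.sqrt (1 + b) ≤ 1 / Real.sqrt (1 + a) :=
  one_div_le_one_div_of_le (Real.sqrt_pos.2 (by linarith)) (Real.sqrt_le_sqrt (by linarith))

theorem pos_and_mul_lt_of_recursion (hlam : 0 < lam) (hμ : 0 ≤ μ) (τ : ℕ → ℝ)
    (hτ1 : 0 < τ 1) (hμτ1 : μ * τ 1 < γ) (hrec : ∀ k ≥ 1, τ (k + 1) = next lam γ μ (τ k)) :
    ∀ k ≥ 1, 0 < τ k ∧ μ * τ k < γ := by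
  intro k hk
  induction k, hk using Nat.le_induction with
  | base => exact ⟨hτ1, hμτ1⟩
  | succ k hk ih =>
    obtain ⟨hpos, hlt⟩ := ih
    have hg : 0 ≤ gain lam γ μ (τ k) := gain_nonneg hlam.le hμ hpos.le hlt
    rw [hrec k hk]
    exact ⟨next_pos hpos hg,
      (mul_le_mul_of_nonneg_left (next_le hpos.le hg) hμ).trans_lt hlt⟩

end StepSize

open StepSize in
theorem theta_monotone_general
    (lam γ μ : ℝ) (hlam : 0 < lam) (hμ : 0 ≤ μ)
    (τ θ : ℕ → ℝ) (hτ1 : 0 < τ 1) (hμτ1 : μ * τ 1 < γ)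
    (hrec : ∀ k ≥ 1, τ (k + 1) =
      τ k / Real.sqrt (1 + (τ k / lam) * (2 * γ - μ * τ k)))
    (hθ : ∀ k ≥ 1, θ k =
      1 / Real.sqrt (1 + (τ (k + 1) / lam) * (2 * γ - μ * τ (k + 1)))) :
    (∀ k ≥ 1, μ * τ k < γ) ∧ (∀ k ≥ 1, θ k ≤ θ (k + 1)) := by
  have hinv := pos_and_mul_lt_of_recursion hlam hμ τ hτ1 hμτ1 hrec
  refine ⟨fun k hk => (hinv k hk).2, fun k hk => ?_⟩
  obtain ⟨hpos₁, hlt₁⟩ := hinv (k + 1) (by omega)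
  obtain ⟨hpos₂, hlt₂⟩ := hinv (k + 1 + 1) (by omega)
  have hτ_le : τ (k + 1 + 1) ≤ τ (k + 1) := (hrec (k + 1) (by omega)).trans_le
    (next_le hpos₁.le (gain_nonneg hlam.le hμ hpos₁.le hlt₁))
  have hgain_le : gain lam γ μ (τ (k + 1 + 1)) ≤ gain lam γ μ (τ (k + 1)) :=
    gain_le_gain hlam.le hτ_le (by nlinarith [mul_le_mul_of_nonneg_left hτ_le hμ])
  rw [hθ k hk, hθ (k + 1) (by omega)]
  exact one_div_sqrt_one_add_le_of_le (gain_nonneg hlam.le hμ hpos₂.le hlt₂) hgain_le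

/-- Under the strengthened assumption `μτ₁ < γ`, the recursion
`τ_{k+1} = τ_k/√(1 + (τ_k/λ)(2γ − μτ_k))`, `θ_k = 1/√(1 + (τ_{k+1}/λ)(2γ − μτ_{k+1}))`
keeps `μτ_k < γ` and makes `(θ_k)` monotonically increasing. -/
theorem theta_monotone
    (lam γ μ : ℝ) (hlam : 0 < lam) (hγ : 0 < γ) (hμ : 0 ≤ μ)
    (τ θ : ℕ → ℝ) (hτ1 : 0 < τ 1) (hμτ1 : μ * τ 1 < γ)
    (hrec : ∀ k ≥ 1, τ (k + 1) =
      τ k / Real.sqrt (1 + (τ k / lam) * (2 * γ - μ * τ k)))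
    (hθ : ∀ k ≥ 1, θ k =
      1 / Real.sqrt (1 + (τ (k + 1) / lam) * (2 * γ - μ * τ (k + 1)))) :
    (∀ k ≥ 1, μ * τ k < γ) ∧ (∀ k ≥ 1, θ k ≤ θ (k + 1)) :=
  theta_monotone_general lam γ μ hlam hμ τ θ hτ1 hμτ1 hrec hθ
end

section
/- Let B : G ⇒ G be monotone, c > 0, and let M₂ᵏ, M₂ᵏ⁻¹ : G → G be linear continuous self-adjoint positive semidefinite. Suppose yᵏ⁺¹ + M₂ᵏ(zᵏ − zᵏ⁺¹) ∈ B zᵏ⁺¹ and yᵏ + M₂ᵏ⁻¹(zᵏ⁻¹ − zᵏ) ∈ B zᵏ. Then ⟨zᵏ⁺¹ − zᵏ, yᵏ⁺¹ − yᵏ⟩ ≥ ‖zᵏ⁺¹ − zᵏ‖²_{M₂ᵏ} − ½‖zᵏ⁺¹ − zᵏ‖²_{M₂ᵏ⁻¹} − ½‖zᵏ − zᵏ⁻¹‖²_{M₂ᵏ⁻¹}. -/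
open RealInnerProductSpace

theorem ContinuousLinearMap.IsPositive.inner_apply_le_half_add_half
    {G : Type*} [NormedAddCommGroup G] [InnerProductSpace ℝ G] {M : G →L[ℝ] G}
    (hM : M.IsPositive) (a b : G) :
    ⟪a, M b⟫ ≤ (1 / 2) * ⟪a, M a⟫ + (1 / 2) * ⟪b, M b⟫ := by
  have hdiff := hM.inner_nonneg_right (a - b)
  have hsymm : ⟪b, M a⟫ = ⟪a, M b⟫ := by
    rw [← hM.inner_left_eq_inner_right, real_inner_comm]
  simp only [map_sub, inner_sub_left, inner_sub_right] at hdiff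
  linarith

theorem consecutive_iterates_inequality_general
    {G : Type*} [NormedAddCommGroup G] [InnerProductSpace ℝ G]
    (B : G → Set G)
    (hB : ∀ x y u v, u ∈ B x → v ∈ B y → 0 ≤ ⟪x - y, u - v⟫)
    (Mk Mk' : G →L[ℝ] G)
    (hMk'_sa : ∀ x y : G, ⟪Mk' x, y⟫ = ⟪x, Mk' y⟫)
    (hMk'_psd : ∀ x : G, 0 ≤ ⟪x, Mk' x⟫)
    (y1 y2 z0 z1 z2 : G)
    (h1 : y2 + Mk (z1 - z2) ∈ B z2)
    (h2 : y1 + Mk' (z0 - z1) ∈ B z1) :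
    ⟪z2 - z1, Mk (z2 - z1)⟫ - (1 / 2) * ⟪z2 - z1, Mk' (z2 - z1)⟫
      - (1 / 2) * ⟪z1 - z0, Mk' (z1 - z0)⟫ ≤ ⟪z2 - z1, y2 - y1⟫ := by
  have hMk' : Mk'.IsPositive :=
    Mk'.isPositive_iff.2 ⟨hMk'_sa, fun x => real_inner_comm x (Mk' x) ▸ hMk'_psd x⟩
  have hmono : ⟪z2 - z1, Mk (z2 - z1)⟫ - ⟪z2 - z1, Mk' (z1 - z0)⟫ ≤ ⟪z2 - z1, y2 - y1⟫ := by
    have h := hB z2 z1 _ _ h1 h2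
    rw [← neg_sub z2 z1, ← neg_sub z1 z0] at h
    simp only [map_neg, inner_sub_right, inner_add_right, inner_neg_right] at h ⊢
    linarith
  linarith [hMk'.inner_apply_le_half_add_half (z2 - z1) (z1 - z0)]

/-- Inequality obtained from the inclusions \eqref{C-var-z-equiv-equiv-equiv}
for consecutive iterates and the monotonicity of `B`. -/
theorem consecutive_iterates_inequality
    {G : Type*} [NormedAddCommGroup G] [InnerProductSpace ℝ G]
    (B : G → Set G)
    (hB : ∀ x y u v, u ∈ B x → v ∈ B y → 0 ≤ ⟪x - y, u - v⟫)
    (c : ℝ) (hc : 0 < c)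
    (Mk Mk' : G →L[ℝ] G)
    (hMk_sa : ∀ x y : G, ⟪Mk x, y⟫ = ⟪x, Mk y⟫)
    (hMk_psd : ∀ x : G, 0 ≤ ⟪x, Mk x⟫)
    (hMk'_sa : ∀ x y : G, ⟪Mk' x, y⟫ = ⟪x, Mk' y⟫)
    (hMk'_psd : ∀ x : G, 0 ≤ ⟪x, Mk' x⟫)
    (y1 y2 z0 z1 z2 : G)
    (h1 : y2 + Mk (z1 - z2) ∈ B z2)
    (h2 : y1 + Mk' (z0 - z1) ∈ B z1) :
    ⟪z2 - z1, Mk (z2 - z1)⟫ - (1 / 2) * ⟪z2 - z1, Mk' (z2 - z1)⟫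
      - (1 / 2) * ⟪z1 - z0, Mk' (z1 - z0)⟫ ≤ ⟪z2 - z1, y2 - y1⟫ :=
  consecutive_iterates_inequality_general B hB Mk Mk' hMk'_sa hMk'_psd y1 y2 z0 z1 z2 h1 h2
end

section
/- Let H be a real Hilbert space, S ⊆ H nonempty, α > 0 and (Wᵏ)_{k≥0} linear continuous self-adjoint operators with Wᵏ ≽ αId and Wᵏ ≽ Wᵏ⁺¹ for all k. If a sequence (xᵏ) satisfies ‖xᵏ⁺¹ − z‖_{Wᵏ⁺¹} ≤ ‖xᵏ − z‖_{Wᵏ} for all z ∈ S and all k, and every weak sequential cluster point of (xᵏ) belongs to S, then (xᵏ) converges weakly to an element of S. -/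
/-!
For `z ∈ S` the Fejér quantities `‖xᵏ - z‖²_{Wᵏ}` are nonincreasing, hence convergent, and they
bound `(xᵏ)`. A nonincreasing sequence of positive operators converges strongly, say `Wᵏ → W`.
If `p, q ∈ S` are weak cluster points, the difference of the Fejér quantities at `p` and `q` is
`2⟪xᵏ, Wᵏ(p - q)⟫` up to terms not involving `xᵏ`, so `⟪xᵏ, Wᵏ(p - q)⟫` converges; its limit along
the two subsequences is `⟪p, W(p - q)⟫` and `⟪q, W(p - q)⟫`, whence `⟪p - q, W(p - q)⟫ = 0` and
`W ≽ α Id` forces `p = q`. A bounded sequence with a unique weak cluster point converges weakly.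
-/

open RealInnerProductSpace Filter Topology

section Weak

variable {H : Type*} [NormedAddCommGroup H] [InnerProductSpace ℝ H]

def TendstoWeakly (u : ℕ → H) (p : H) : Prop :=
  ∀ y : H, Tendsto (fun n => ⟪u n, y⟫) atTop (𝓝 ⟪p, y⟫)

theorem TendstoWeakly.tendsto_inner {u v : ℕ → H} {p w : H} {C : ℝ} (hu : TendstoWeakly u p)
    (hC : ∀ n, ‖u n‖ ≤ C) (hv : Tendsto v atTop (𝓝 w)) :
    Tendsto (fun n => ⟪u n, v n⟫) atTop (𝓝 ⟪p, w⟫) := by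
  have hsmall : Tendsto (fun n => ⟪u n, v n - w⟫) atTop (𝓝 0) := by
    refine squeeze_zero_norm (fun n => ?_)
      (by simpa using (tendsto_sub_nhds_zero_iff.2 hv).norm.const_mul C)
    exact (norm_inner_le_norm (𝕜 := ℝ) _ _).trans
      (mul_le_mul_of_nonneg_right (hC n) (norm_nonneg _))
  simpa [inner_sub_right] using (hu w).add hsmall

/- Sequential Banach–Alaoglu on the separable closed span `M` of the sequence, applied to the
functionals `⟪u n, ·⟫` on `M`; off `M` nothing is lost since `⟪m, y⟫ = ⟪m, P_M y⟫` for `m ∈ M`. -/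
theorem exists_strictMono_tendstoWeakly [CompleteSpace H] {u : ℕ → H} {C : ℝ}
    (hu : ∀ n, ‖u n‖ ≤ C) : ∃ p, ∃ φ : ℕ → ℕ, StrictMono φ ∧ TendstoWeakly (u ∘ φ) p := by
  set M := (Submodule.span ℝ (Set.range u)).topologicalClosure
  have : TopologicalSpace.SeparableSpace M := by
    have := ((Set.countable_range u).isSeparable.span (R := ℝ)).closure
    rw [← Submodule.topologicalClosure_coe] at this
    exact this.separableSpace
  have : CompleteSpace M := (Submodule.isClosed_topologicalClosure _).completeSpace_coe
  have hmem (n : ℕ) : u n ∈ M :=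
    Submodule.le_topologicalClosure _ (Submodule.subset_span ⟨n, rfl⟩)
  let f : ℕ → WeakDual ℝ M := fun n => (innerSL ℝ (u n)).comp M.subtypeL
  have hf (n : ℕ) : f n ∈ WeakDual.toStrongDual ⁻¹' Metric.closedBall 0 C := by
    refine (mem_closedBall_zero_iff (E := StrongDual ℝ M)).2 <|
      ContinuousLinearMap.opNorm_le_bound _ ((norm_nonneg _).trans (hu 0)) fun v => ?_
    exact (norm_inner_le_norm (𝕜 := ℝ) (u n) (v : H)).trans
      (mul_le_mul_of_nonneg_right (hu n) (norm_nonneg _))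
  obtain ⟨g, -, φ, hφ, hg⟩ := WeakDual.isSeqCompact_closedBall ℝ M 0 C hf
  refine ⟨((InnerProductSpace.toDual ℝ M).symm g : M), φ, hφ, fun y => ?_⟩
  have hproj (m : H) (hm : m ∈ M) : ⟪m, y⟫ = ⟪m, M.starProjection y⟫ := by
    rw [← Submodule.inner_starProjection_left_eq_right, M.starProjection_eq_self_iff.2 hm]
  simp only [Function.comp_apply, hproj _ (hmem _), hproj _ (Subtype.mem _)]
  convert tendsto_iff_forall_eval_tendsto_topDualPairing.1 hg (M.orthogonalProjectionOnto y)
    using 2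
  · rfl
  · exact InnerProductSpace.toDual_symm_apply (𝕜 := ℝ) (E := M)

theorem tendstoWeakly_of_forall_subseq [CompleteSpace H] {u : ℕ → H} {p : H} {C : ℝ}
    (hC : ∀ n, ‖u n‖ ≤ C)
    (h : ∀ (φ : ℕ → ℕ) (q : H), StrictMono φ → TendstoWeakly (u ∘ φ) q → q = p) :
    TendstoWeakly u p := fun y => by
  refine tendsto_of_subseq_tendsto fun ns hns => ?_
  obtain ⟨θ, -, hθ⟩ := strictMono_subseq_of_tendsto_atTop hns
  obtain ⟨q, ψ, hψ, hq⟩ := exists_strictMono_tendstoWeakly (u := u ∘ ns ∘ θ) fun n => hC _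
  obtain rfl := h (ns ∘ θ ∘ ψ) q (hθ.comp hψ) hq
  exact ⟨θ ∘ ψ, hq y⟩

end Weak

namespace ContinuousLinearMap

variable {H : Type*} [NormedAddCommGroup H] [InnerProductSpace ℝ H]

theorem inner_map_self_le_of_le {S T : H →L[ℝ] H} (h : S ≤ T) (v : H) :
    ⟪v, S v⟫ ≤ ⟪v, T v⟫ := by
  have := ((le_def S T).1 h).inner_nonneg_right v
  rwa [sub_apply, inner_sub_right, sub_nonneg] at this

theorem le_of_inner_map_self_le {S T : H →L[ℝ] H} (hS : (S : H →ₗ[ℝ] H).IsSymmetric)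
    (hT : (T : H →ₗ[ℝ] H).IsSymmetric) (h : ∀ v, ⟪v, S v⟫ ≤ ⟪v, T v⟫) : S ≤ T := by
  refine (le_def S T).2 ((isPositive_iff _).2 ⟨hT.sub hS, fun v => ?_⟩)
  rw [sub_apply, inner_sub_left, sub_nonneg, real_inner_comm v, real_inner_comm v]
  exact h v

theorem IsPositive.inner_map_sq_le {T : H →L[ℝ] H} (hT : T.IsPositive) (u v : H) :
    ⟪u, T v⟫ ^ 2 ≤ ⟪u, T u⟫ * ⟪v, T v⟫ := by
  have hquad (t : ℝ) : 0 ≤ ⟪v, T v⟫ * (t * t) + 2 * ⟪u, T v⟫ * t + ⟪u, T u⟫ := by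
    have hvu : ⟪v, T u⟫ = ⟪u, T v⟫ := by
      rw [← hT.inner_left_eq_inner_right, real_inner_comm]
    have := hT.inner_nonneg_right (u + t • v)
    simp only [map_add, map_smul, inner_add_left, inner_add_right, real_inner_smul_left,
      real_inner_smul_right, hvu] at this
    linarith
  have := discrim_le_zero hquad
  rw [discrim] at this
  linarith

theorem norm_apply_sq_le_of_le {D E : H →L[ℝ] H} (hD : 0 ≤ D) (hDE : D ≤ E) (y : H) :
    ‖D y‖ ^ 2 ≤ ‖E‖ * ⟪y, D y⟫ := by
  rw [nonneg_iff_isPositive] at hD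
  set w := D y
  have hE : ⟪w, D w⟫ ≤ ‖E‖ * ‖w‖ ^ 2 := calc
    ⟪w, D w⟫ ≤ ⟪w, E w⟫ := inner_map_self_le_of_le hDE w
    _ ≤ ‖w‖ * ‖E w‖ := real_inner_le_norm _ _
    _ ≤ ‖w‖ * (‖E‖ * ‖w‖) := by gcongr; exact E.le_opNorm w
    _ = ‖E‖ * ‖w‖ ^ 2 := by ring
  have hCS : (‖w‖ ^ 2) ^ 2 ≤ ⟪w, D w⟫ * ⟪y, D y⟫ := by
    rw [← real_inner_self_eq_norm_sq]
    exact hD.inner_map_sq_le w y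
  rcases (sq_nonneg ‖w‖).eq_or_lt with h0 | hpos
  · rw [← h0]
    exact mul_nonneg (norm_nonneg _) (hD.inner_nonneg_right y)
  · nlinarith [hD.inner_nonneg_right y]

theorem exists_tendsto_apply_of_antitone [CompleteSpace H] {T : ℕ → H →L[ℝ] H}
    (hT : Antitone T) (hpos : ∀ k, 0 ≤ T k) (y : H) :
    ∃ w, Tendsto (fun k => T k y) atTop (𝓝 w) := by
  set q : ℕ → ℝ := fun k => ⟪y, T k y⟫
  have hq : Antitone q := fun m n hmn => inner_map_self_le_of_le (hT hmn) y
  have hq_bdd : BddBelow (Set.range q) :=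
    ⟨0, by rintro _ ⟨k, rfl⟩; exact ((nonneg_iff_isPositive _).1 (hpos k)).inner_nonneg_right y⟩
  set Q := ⨅ k, q k
  have hqQ : Tendsto q atTop (𝓝 Q) := tendsto_atTop_ciInf hq hq_bdd
  refine cauchySeq_tendsto_of_complete <|
    cauchySeq_of_le_tendsto_0' (fun n => √(‖T 0‖ * (q n - Q))) (fun m n hmn => ?_) ?_
  · have hle : T m - T n ≤ T 0 := by
      rw [le_def, show T 0 - (T m - T n) = (T 0 - T m) + T n by abel]
      exact (hT (Nat.zero_le m)).add ((nonneg_iff_isPositive _).1 (hpos n))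
    rw [dist_eq_norm, ← sub_apply]
    refine Real.le_sqrt_of_sq_le ?_
    calc ‖(T m - T n) y‖ ^ 2 ≤ ‖T 0‖ * ⟪y, (T m - T n) y⟫ :=
          norm_apply_sq_le_of_le ((nonneg_iff_isPositive _).2 (hT hmn)) hle y
      _ ≤ ‖T 0‖ * (q m - Q) := by
          rw [sub_apply, inner_sub_right]
          gcongr
          exact ciInf_le hq_bdd n
  · simpa using ((hqQ.sub_const Q).const_mul ‖T 0‖).sqrt

end ContinuousLinearMap

section Opial

variable {H : Type*} [NormedAddCommGroup H] [InnerProductSpace ℝ H]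
  {W : ℕ → H →L[ℝ] H} {x : ℕ → H} {α : ℝ}

theorem exists_norm_le_of_antitone_inner_map (hα : 0 < α)
    (hW : ∀ k v, α * ‖v‖ ^ 2 ≤ ⟪v, W k v⟫) {z : H}
    (hz : Antitone fun k => ⟪x k - z, W k (x k - z)⟫) : ∃ C, ∀ k, ‖x k‖ ≤ C := by
  refine ⟨‖z‖ + √(⟪x 0 - z, W 0 (x 0 - z)⟫ / α), fun k => ?_⟩
  have hk : ‖x k - z‖ ≤ √(⟪x 0 - z, W 0 (x 0 - z)⟫ / α) := by
    refine Real.le_sqrt_of_sq_le ?_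
    rw [le_div_iff₀ hα]
    linarith [hW k (x k - z), hz (Nat.zero_le k)]
  calc ‖x k‖ = ‖z + (x k - z)‖ := by rw [add_sub_cancel]
    _ ≤ ‖z‖ + ‖x k - z‖ := norm_add_le _ _
    _ ≤ _ := by gcongr

theorem eq_of_tendstoWeakly_of_antitone_inner_map (hα : 0 < α)
    (hW_pos : ∀ k v, α * ‖v‖ ^ 2 ≤ ⟪v, W k v⟫) (hW_sym : ∀ k, (W k : H →ₗ[ℝ] H).IsSymmetric)
    (hW_lim : ∀ v, ∃ w, Tendsto (fun k => W k v) atTop (𝓝 w))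
    {C : ℝ} (hC : ∀ k, ‖x k‖ ≤ C) {p q : H}
    (hp : Antitone fun k => ⟪x k - p, W k (x k - p)⟫)
    (hq : Antitone fun k => ⟪x k - q, W k (x k - q)⟫)
    {φ ψ : ℕ → ℕ} (hφ : StrictMono φ) (hψ : StrictMono ψ)
    (hxp : TendstoWeakly (x ∘ φ) p) (hxq : TendstoWeakly (x ∘ ψ) q) : p = q := by
  have hconv {z : H} (hz : Antitone fun k => ⟪x k - z, W k (x k - z)⟫) :
      ∃ L, Tendsto (fun k => ⟪x k - z, W k (x k - z)⟫) atTop (𝓝 L) :=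
    ⟨_, tendsto_atTop_ciInf hz ⟨0, by
      rintro _ ⟨k, rfl⟩
      exact (by positivity : 0 ≤ α * ‖x k - z‖ ^ 2).trans (hW_pos k _)⟩⟩
  obtain ⟨Lp, hLp⟩ := hconv hp
  obtain ⟨Lq, hLq⟩ := hconv hq
  obtain ⟨w, hw⟩ := hW_lim (p - q)
  obtain ⟨wp, hwp⟩ := hW_lim p
  obtain ⟨wq, hwq⟩ := hW_lim q
  have hid : ∀ k, ⟪x k, W k (p - q)⟫ = (⟪x k - q, W k (x k - q)⟫ - ⟪x k - p, W k (x k - p)⟫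
      - ⟪q, W k q⟫ + ⟪p, W k p⟫) / 2 := fun k => by
    have hsym : ∀ u v, ⟪u, W k v⟫ = ⟪v, W k u⟫ := fun u v =>
      (hW_sym k u v).symm.trans (real_inner_comm _ _)
    simp only [map_sub, inner_sub_left, inner_sub_right, hsym q (x k), hsym p (x k)]
    ring
  have hlim : Tendsto (fun k => ⟪x k, W k (p - q)⟫) atTop
      (𝓝 ((Lq - Lp - ⟪q, wq⟫ + ⟪p, wp⟫) / 2)) := by
    simp only [hid]
    exact (((hLq.sub hLp).sub (tendsto_const_nhds.inner hwq)).add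
      (tendsto_const_nhds.inner hwp)).div_const 2
  have hℓp := tendsto_nhds_unique (hlim.comp hφ.tendsto_atTop)
    (hxp.tendsto_inner (fun n => hC _) (hw.comp hφ.tendsto_atTop))
  have hℓq := tendsto_nhds_unique (hlim.comp hψ.tendsto_atTop)
    (hxq.tendsto_inner (fun n => hC _) (hw.comp hψ.tendsto_atTop))
  have hdw : ⟪p - q, w⟫ = 0 := by rw [inner_sub_left]; linarith
  have hd : α * ‖p - q‖ ^ 2 ≤ 0 := hdw ▸ ge_of_tendsto (tendsto_const_nhds.inner hw)
    (Eventually.of_forall fun k => hW_pos k _)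
  have : ‖p - q‖ ^ 2 ≤ 0 := by nlinarith
  rw [← sub_eq_zero, ← norm_eq_zero, ← sq_eq_zero_iff]
  exact le_antisymm this (sq_nonneg _)

end Opial

/-- Variable metric Opial lemma: if `(Wᵏ)` is a nonincreasing sequence of
uniformly strongly positive self-adjoint operators, `(xᵏ)` is Fejér monotone
w.r.t. `S` in the variable metrics, and every weak sequential cluster point of
`(xᵏ)` lies in `S`, then `(xᵏ)` converges weakly to a point of `S`. -/
theorem opial_variable_metric
    {H : Type*} [NormedAddCommGroup H] [InnerProductSpace ℝ H] [CompleteSpace H]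
    (S : Set H) (hS : S.Nonempty) (α : ℝ) (hα : 0 < α)
    (W : ℕ → H →L[ℝ] H)
    (hW_sa : ∀ k, ∀ x y : H, ⟪W k x, y⟫ = ⟪x, W k y⟫)
    (hW_pos : ∀ k, ∀ x : H, α * ‖x‖ ^ 2 ≤ ⟪x, W k x⟫)
    (hW_mono : ∀ k, ∀ x : H, ⟪x, W (k + 1) x⟫ ≤ ⟪x, W k x⟫)
    (x : ℕ → H)
    (hfejer : ∀ z ∈ S, ∀ k : ℕ,
      ⟪x (k + 1) - z, W (k + 1) (x (k + 1) - z)⟫ ≤ ⟪x k - z, W k (x k - z)⟫)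
    (hcluster : ∀ p : H, (∃ φ : ℕ → ℕ, StrictMono φ ∧
        ∀ y : H, Tendsto (fun n => ⟪x (φ n), y⟫) atTop (𝓝 ⟪p, y⟫)) → p ∈ S) :
    ∃ p ∈ S, ∀ y : H, Tendsto (fun k => ⟪x k, y⟫) atTop (𝓝 ⟪p, y⟫) := by
  have hW_sym (k : ℕ) : (W k : H →ₗ[ℝ] H).IsSymmetric := hW_sa k
  have hW_nonneg (k : ℕ) : 0 ≤ W k :=
    ContinuousLinearMap.le_of_inner_map_self_le (by simp)
      (hW_sym k) fun v => by simpa using (by positivity : 0 ≤ α * ‖v‖ ^ 2).trans (hW_pos k v)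
  have hW_anti : Antitone W := antitone_nat_of_succ_le fun k =>
    ContinuousLinearMap.le_of_inner_map_self_le (hW_sym (k + 1)) (hW_sym k) (hW_mono k)
  have hfejer_anti (z : H) (hz : z ∈ S) : Antitone fun k => ⟪x k - z, W k (x k - z)⟫ :=
    antitone_nat_of_succ_le (hfejer z hz)
  obtain ⟨z₀, hz₀⟩ := hS
  obtain ⟨C, hC⟩ := exists_norm_le_of_antitone_inner_map hα hW_pos (hfejer_anti z₀ hz₀)
  have huniq {φ ψ : ℕ → ℕ} {p q : H} (hφ : StrictMono φ) (hψ : StrictMono ψ)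
      (hp : TendstoWeakly (x ∘ φ) p) (hq : TendstoWeakly (x ∘ ψ) q) : p = q :=
    eq_of_tendstoWeakly_of_antitone_inner_map hα hW_pos hW_sym
      (ContinuousLinearMap.exists_tendsto_apply_of_antitone hW_anti hW_nonneg) hC
      (hfejer_anti p (hcluster p ⟨φ, hφ, hp⟩)) (hfejer_anti q (hcluster q ⟨ψ, hψ, hq⟩))
      hφ hψ hp hq
  obtain ⟨p, φ, hφ, hp⟩ := exists_strictMono_tendstoWeakly hC
  exact ⟨p, hcluster p ⟨φ, hφ, hp⟩,
    tendstoWeakly_of_forall_subseq hC fun ψ q hψ hq => huniq hψ hφ hq hp⟩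
end

section
/- Let H be a real Hilbert space, A : H ⇒ H and C : H → H with A + C γ-strongly monotone for γ > 0, C μ-Lipschitz, and let (x̄, v̄) satisfy −L*v̄ ∈ Ax̄ + Cx̄ where L : H → G is linear continuous. Suppose x, x⁺ ∈ H, y ∈ G, λ > 0, τ > 0 satisfy (λ/τ)(x − x⁺) − L*y + Cx⁺ − Cx ∈ (A + C)x⁺. Then (λ/(2τ))‖x − x̄‖² ≥ (λ/(2τ) + γ − μτ/2)‖x⁺ − x̄‖² + ((λ − μ)/(2τ))‖x⁺ − x‖² + ⟨y − v̄, Lx⁺ − Lx̄⟩. -/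
open RealInnerProductSpace

/-! Test the resolvent-type inclusion for `x⁺` against the optimality inclusion for `x̄` using
strong monotonicity of `A + C`. The `λ/τ` term becomes a difference of squared distances by
polarization, the adjoint term becomes the pairing `⟪y - v̄, L x⁺ - L x̄⟫`, and the error
`⟪x⁺ - x̄, C x⁺ - C x⟫` coming from evaluating `C` at `x` instead of `x⁺` is absorbed by the
Lipschitz bound followed by Young's inequality with weight `τ`. -/

lemma mul_le_weighted_sq_add {a b τ : ℝ} (hτ : 0 < τ) :
    a * b ≤ τ / 2 * a ^ 2 + 1 / (2 * τ) * b ^ 2 := by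
  have key : 0 ≤ (τ * a - b) ^ 2 / (2 * τ) := by positivity
  have expand : (τ * a - b) ^ 2 / (2 * τ) = τ / 2 * a ^ 2 + 1 / (2 * τ) * b ^ 2 - a * b := by
    field_simp
    ring
  linarith

lemma real_inner_le_weighted_sq_add_of_norm_le {E : Type*} [NormedAddCommGroup E]
    [InnerProductSpace ℝ E] {u v w : E} {μ τ : ℝ} (hμ : 0 ≤ μ) (hτ : 0 < τ)
    (hv : ‖v‖ ≤ μ * ‖w‖) :
    ⟪u, v⟫ ≤ μ * τ / 2 * ‖u‖ ^ 2 + μ / (2 * τ) * ‖w‖ ^ 2 :=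
  calc ⟪u, v⟫ ≤ ‖u‖ * ‖v‖ := real_inner_le_norm u v
    _ ≤ ‖u‖ * (μ * ‖w‖) := mul_le_mul_of_nonneg_left hv (norm_nonneg u)
    _ = μ * (‖u‖ * ‖w‖) := by ring
    _ ≤ μ * (τ / 2 * ‖u‖ ^ 2 + 1 / (2 * τ) * ‖w‖ ^ 2) :=
        mul_le_mul_of_nonneg_left (mul_le_weighted_sq_add hτ) hμ
    _ = μ * τ / 2 * ‖u‖ ^ 2 + μ / (2 * τ) * ‖w‖ ^ 2 := by ring

lemma real_inner_sub_adjoint {H G : Type*} [NormedAddCommGroup H] [InnerProductSpace ℝ H]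
    [CompleteSpace H] [NormedAddCommGroup G] [InnerProductSpace ℝ G] [CompleteSpace G]
    (L : H →L[ℝ] G) (a b : H) (y v : G) :
    ⟪a - b, ContinuousLinearMap.adjoint L y - ContinuousLinearMap.adjoint L v⟫
      = ⟪y - v, L a - L b⟫ := by
  rw [← map_sub, ContinuousLinearMap.adjoint_inner_right, ← map_sub, real_inner_comm]

theorem strong_monotonicity_estimate_general
    {H G : Type*} [NormedAddCommGroup H] [InnerProductSpace ℝ H] [CompleteSpace H]
    [NormedAddCommGroup G] [InnerProductSpace ℝ G] [CompleteSpace G]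
    (A : H → Set H) (C : H → H) (L : H →L[ℝ] G)
    (γ μ : ℝ) (hμ : 0 ≤ μ)
    (hsm : ∀ a b : H, ∀ p q : H,
      (∃ u ∈ A a, p = u + C a) → (∃ w ∈ A b, q = w + C b) →
      γ * ‖a - b‖ ^ 2 ≤ ⟪a - b, p - q⟫)
    (hlip : ∀ a b : H, ‖C a - C b‖ ≤ μ * ‖a - b‖)
    (xbar : H) (vbar : G)
    (hpd : ∃ u ∈ A xbar, -((ContinuousLinearMap.adjoint L) vbar) = u + C xbar)
    (x xp : H) (y : G) (lam τ : ℝ) (hτ : 0 < τ)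
    (hincl : ∃ u ∈ A xp,
      (lam / τ) • (x - xp) - (ContinuousLinearMap.adjoint L) y + C xp - C x
        = u + C xp) :
    (lam / (2 * τ) + γ - μ * τ / 2) * ‖xp - xbar‖ ^ 2
      + ((lam - μ) / (2 * τ)) * ‖xp - x‖ ^ 2
      + ⟪y - vbar, L xp - L xbar⟫
    ≤ (lam / (2 * τ)) * ‖x - xbar‖ ^ 2 := by
  have hmono := hsm xp xbar _ _ hincl hpd
  have hsplit : ⟪xp - xbar, (lam / τ) • (x - xp) - (ContinuousLinearMap.adjoint L) y + C xp - C x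
      - -(ContinuousLinearMap.adjoint L) vbar⟫
      = lam / τ * ⟪xp - xbar, x - xp⟫ - ⟪y - vbar, L xp - L xbar⟫
        + ⟪xp - xbar, C xp - C x⟫ := by
    rw [← real_inner_sub_adjoint, ← real_inner_smul_right, ← inner_sub_right, ← inner_add_right]
    congr 1
    abel
  have hpolar : ‖x - xbar‖ ^ 2 = ‖xp - xbar‖ ^ 2 + 2 * ⟪xp - xbar, x - xp⟫ + ‖xp - x‖ ^ 2 := by
    rw [norm_sub_rev xp x, ← norm_add_sq_real, sub_add_sub_cancel']
  have hcross : lam / τ * ⟪xp - xbar, x - xp⟫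
      = lam / (2 * τ) * (‖x - xbar‖ ^ 2 - ‖xp - xbar‖ ^ 2 - ‖xp - x‖ ^ 2) := by
    rw [hpolar]
    field_simp
    ring
  have hlipschitz := real_inner_le_weighted_sq_add_of_norm_le (u := xp - xbar) hμ hτ (hlip xp x)
  rw [hsplit, hcross] at hmono
  linear_combination hmono + hlipschitz

/-- Inequality \eqref{ineqx-2}: combining the `γ`-strong monotonicity of
`A + C` with the `μ`-Lipschitz continuity of `C`. -/
theorem strong_monotonicity_estimate
    {H G : Type*} [NormedAddCommGroup H] [InnerProductSpace ℝ H] [CompleteSpace H]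
    [NormedAddCommGroup G] [InnerProductSpace ℝ G] [CompleteSpace G]
    (A : H → Set H) (C : H → H) (L : H →L[ℝ] G)
    (γ μ : ℝ) (hγ : 0 < γ) (hμ : 0 ≤ μ)
    (hsm : ∀ a b : H, ∀ p q : H,
      (∃ u ∈ A a, p = u + C a) → (∃ w ∈ A b, q = w + C b) →
      γ * ‖a - b‖ ^ 2 ≤ ⟪a - b, p - q⟫)
    (hlip : ∀ a b : H, ‖C a - C b‖ ≤ μ * ‖a - b‖)
    (xbar : H) (vbar : G)
    (hpd : ∃ u ∈ A xbar, -((ContinuousLinearMap.adjoint L) vbar) = u + C xbar)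
    (x xp : H) (y : G) (lam τ : ℝ) (hlam : 0 < lam) (hτ : 0 < τ)
    (hincl : ∃ u ∈ A xp,
      (lam / τ) • (x - xp) - (ContinuousLinearMap.adjoint L) y + C xp - C x
        = u + C xp) :
    (lam / (2 * τ) + γ - μ * τ / 2) * ‖xp - xbar‖ ^ 2
      + ((lam - μ) / (2 * τ)) * ‖xp - x‖ ^ 2
      + ⟪y - vbar, L xp - L xbar⟫
    ≤ (lam / (2 * τ)) * ‖x - xbar‖ ^ 2 :=
  strong_monotonicity_estimate_general A C L γ μ hμ hsm hlip xbar vbar hpd x xp y lam τ hτ hincl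
end
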